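/- Let A, B, C, D > 0, 0 < p < 2, 0 < q < 2, and let ε₁, ε₂ > 0 satisfy ε₁^{2−p}·ε₂ ≤ B/A and ε₁·ε₂^{2−q} ≤ D/C. If w, z : [0,T) → [0,∞) are differentiable with w'(t) = A·w²·z − B·w^p, z'(t) = C·w·z² − D·z^q on [0,T) and w(0) = ε₁, z(0) = ε₂, then w(t) ≤ ε₁ and z(t) ≤ ε₂ for all t ∈ [0,T); in particular the solution is bounded and exists globally. -/
import Mathlib


open Set MeasureTheory Filter
open Topology

private lemma max_sub_max_le (a b : ℝ) : max a 0 - max b 0 ≤ max (a - b) 0 := by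
  have h1 : a ≤ max (a - b) 0 + max b 0 := by
    have := le_max_left (a - b) (0:ℝ); have := le_max_left b (0:ℝ); linarith
  have h2 : (0:ℝ) ≤ max (a - b) 0 + max b 0 := by positivity
  have := max_le h1 h2; linarith

/-- Core pointwise estimate: `A W² Z − B W^p ≤ 2AM²·((W−ε₁)₊ + (Z−ε₂)₊)`. -/
private lemma aux_bound (A B p ε₁ ε₂ M : ℝ)
    (hA : 0 < A) (hB : 0 < B) (hp0 : 0 < p) (hp2 : p < 2)
    (hε₁ : 0 < ε₁) (hε₂ : 0 < ε₂)
    (h1 : A * ε₁ ^ (2 - p) * ε₂ ≤ B)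
    (W Z : ℝ) (hW : 0 ≤ W) (hZ : 0 ≤ Z)
    (hWM : W ≤ M) (hZM : Z ≤ M) (hε₁M : ε₁ ≤ M) (hε₂M : ε₂ ≤ M) :
    A * W ^ (2 : ℕ) * Z - B * W ^ p
      ≤ 2 * A * M ^ 2 * (max (W - ε₁) 0 + max (Z - ε₂) 0) := by
  set u := max (W - ε₁) 0 with hu
  set v := max (Z - ε₂) 0 with hv
  have hu0 : 0 ≤ u := le_max_right _ _
  have hv0 : 0 ≤ v := le_max_right _ _
  have hM : 0 < M := lt_of_lt_of_le hε₁ hε₁M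
  have hZv : Z - ε₂ ≤ v := le_max_left _ _
  have hW2 : W ^ (2 : ℕ) ≤ M ^ 2 := by nlinarith
  have key1 : W ^ (2 : ℕ) * (Z - ε₂) ≤ M ^ 2 * v := by
    nlinarith [mul_nonneg (mul_nonneg hW hW) hv0, sq_nonneg W]
  rcases le_or_gt W ε₁ with hWle | hWgt
  · -- case `W ≤ ε₁`
    rcases eq_or_lt_of_le hW with h0 | h0
    · rw [← h0]
      have : (0:ℝ) ^ p = 0 := Real.zero_rpow hp0.ne'
      simp [this]
      positivity
    · have e : W ^ (2 : ℕ) = W ^ (2 - p) * W ^ p := by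
        rw [← Real.rpow_natCast W 2, ← Real.rpow_add h0]; norm_num
      have hmono : W ^ (2 - p) ≤ ε₁ ^ (2 - p) :=
        Real.rpow_le_rpow hW hWle (by linarith)
      have hWp : (0:ℝ) ≤ W ^ p := Real.rpow_nonneg hW p
      have hkey : A * W ^ (2 : ℕ) * ε₂ ≤ B * W ^ p := by
        rw [e]
        calc A * (W ^ (2 - p) * W ^ p) * ε₂ = (A * W ^ (2 - p) * ε₂) * W ^ p := by ring
          _ ≤ (A * ε₁ ^ (2 - p) * ε₂) * W ^ p := by
              have := mul_le_mul_of_nonneg_left hmono hA.le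
              apply mul_le_mul_of_nonneg_right _ hWp
              exact mul_le_mul_of_nonneg_right this hε₂.le
          _ ≤ B * W ^ p := mul_le_mul_of_nonneg_right h1 hWp
      have c1 := mul_le_mul_of_nonneg_left key1 hA.le
      have c4 : 0 ≤ A * (M ^ 2 * u) := by positivity
      have c5 : 0 ≤ A * (M ^ 2 * v) := by positivity
      linarith [c1, hkey, c4, c5]
  · -- case `ε₁ < W`
    have huW : u = W - ε₁ := max_eq_left (by linarith)
    have hWp : ε₁ ^ p ≤ W ^ p := Real.rpow_le_rpow hε₁.le hWgt.le hp0.le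
    have hε₁p : (0:ℝ) ≤ ε₁ ^ p := Real.rpow_nonneg hε₁.le p
    have e : ε₁ ^ (2 : ℕ) = ε₁ ^ (2 - p) * ε₁ ^ p := by
      rw [← Real.rpow_natCast ε₁ 2, ← Real.rpow_add hε₁]; norm_num
    have hee : A * ε₁ ^ (2 : ℕ) * ε₂ ≤ B * ε₁ ^ p := by
      rw [e]
      calc A * (ε₁ ^ (2 - p) * ε₁ ^ p) * ε₂ = (A * ε₁ ^ (2 - p) * ε₂) * ε₁ ^ p := by ring
        _ ≤ B * ε₁ ^ p := mul_le_mul_of_nonneg_right h1 hε₁p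
    have k2 : ε₂ * (W ^ (2 : ℕ) - ε₁ ^ (2 : ℕ)) ≤ 2 * M ^ 2 * u := by
      rw [huW]
      have hs : (0:ℝ) ≤ W - ε₁ := by linarith
      have hWε : ε₂ * (W + ε₁) ≤ 2 * M ^ 2 := by nlinarith
      nlinarith [mul_nonneg (sub_nonneg.mpr hWε) hs]
    have c1 := mul_le_mul_of_nonneg_left key1 hA.le
    have c2 := mul_le_mul_of_nonneg_left k2 hA.le
    have c3 := mul_le_mul_of_nonneg_left hWp hB.le
    have c5 : 0 ≤ A * (M ^ 2 * v) := by positivity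
    linarith [c1, c2, c3, hee, c5]

/-- Example 3.1(2) of the paper: for `w' = A w² z − B w^p`, `z' = C w z² − D z^q` with
small initial data `ε₁, ε₂` satisfying `ε₁^{2−p} ε₂ ≤ B/A` and `ε₁ ε₂^{2−q} ≤ D/C`,
the constant pair `(ε₁, ε₂)` is a sup-solution: the solution stays below it for all
time and is global. -/
theorem global_existence_example31
    (A B C D p q ε₁ ε₂ T : ℝ)
    (hA : 0 < A) (hB : 0 < B) (hC : 0 < C) (hD : 0 < D)
    (hp0 : 0 < p) (hp2 : p < 2) (hq0 : 0 < q) (hq2 : q < 2)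
    (hε₁ : 0 < ε₁) (hε₂ : 0 < ε₂)
    (h1 : ε₁ ^ (2 - p) * ε₂ ≤ B / A) (h2 : ε₁ * ε₂ ^ (2 - q) ≤ D / C)
    (w z : ℝ → ℝ)
    (hw0 : w 0 = ε₁) (hz0 : z 0 = ε₂)
    (hnn : ∀ t ∈ Ico (0 : ℝ) T, 0 ≤ w t ∧ 0 ≤ z t)
    (hw' : ∀ t ∈ Ico (0 : ℝ) T,
      HasDerivAt w (A * w t ^ (2 : ℕ) * z t - B * w t ^ p) t)
    (hz' : ∀ t ∈ Ico (0 : ℝ) T,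
      HasDerivAt z (C * w t * z t ^ (2 : ℕ) - D * z t ^ q) t) :
    ∀ t ∈ Ico (0 : ℝ) T, w t ≤ ε₁ ∧ z t ≤ ε₂ := by
  have h1' : A * ε₁ ^ (2 - p) * ε₂ ≤ B := by
    have := (le_div_iff₀ hA).mp h1; linarith [this]
  have h2' : C * ε₂ ^ (2 - q) * ε₁ ≤ D := by
    have := (le_div_iff₀ hC).mp h2; nlinarith [this]
  intro t ht
  have hsub : Icc (0:ℝ) t ⊆ Ico (0:ℝ) T :=
    fun s hs => ⟨hs.1, lt_of_le_of_lt hs.2 ht.2⟩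
  -- continuity
  have hwc : ContinuousOn w (Icc 0 t) :=
    fun s hs => ((hw' s (hsub hs)).continuousAt).continuousWithinAt
  have hzc : ContinuousOn z (Icc 0 t) :=
    fun s hs => ((hz' s (hsub hs)).continuousAt).continuousWithinAt
  -- bound M
  obtain ⟨M₁, hM₁⟩ := isCompact_Icc.exists_bound_of_continuousOn hwc
  obtain ⟨M₂, hM₂⟩ := isCompact_Icc.exists_bound_of_continuousOn hzc
  set M : ℝ := max (max M₁ M₂) (max ε₁ ε₂) with hM
  have hε₁M : ε₁ ≤ M := le_trans (le_max_left _ _) (le_max_right _ _)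
  have hε₂M : ε₂ ≤ M := le_trans (le_max_right _ _) (le_max_right _ _)
  have hwM : ∀ s ∈ Icc (0:ℝ) t, w s ≤ M := fun s hs =>
    le_trans (le_trans (le_abs_self _) (hM₁ s hs))
      (le_trans (le_max_left _ _) (le_max_left _ _))
  have hzM : ∀ s ∈ Icc (0:ℝ) t, z s ≤ M := fun s hs =>
    le_trans (le_trans (le_abs_self _) (hM₂ s hs))
      (le_trans (le_max_right _ _) (le_max_left _ _))
  set K : ℝ := 2 * (A + C) * M ^ 2 with hK
  set f : ℝ → ℝ := fun s => max (w s - ε₁) 0 + max (z s - ε₂) 0 with hf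
  set f' : ℝ → ℝ := fun s =>
    max (A * w s ^ (2 : ℕ) * z s - B * w s ^ p) 0
      + max (C * w s * z s ^ (2 : ℕ) - D * z s ^ q) 0 with hf'def
  have hfc : ContinuousOn f (Icc 0 t) :=
    ((hwc.sub continuousOn_const).sup continuousOn_const).add
      ((hzc.sub continuousOn_const).sup continuousOn_const)
  have hslope : ∀ x ∈ Ico (0:ℝ) t, ∀ r, f' x < r →
      ∃ᶠ y in 𝓝[>] x, (y - x)⁻¹ * (f y - f x) < r := by
    intro x hx r hr
    have hxT : x ∈ Ico (0:ℝ) T := ⟨hx.1, lt_trans hx.2 ht.2⟩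
    have Hw : Tendsto (fun y => (y - x)⁻¹ * (w y - w x)) (𝓝[>] x)
        (𝓝 (A * w x ^ (2 : ℕ) * z x - B * w x ^ p)) := by
      have h := hasDerivAt_iff_tendsto_slope.mp (hw' x hxT)
      have hm : 𝓝[>] x ≤ 𝓝[≠] x :=
        nhdsWithin_mono _ (fun y hy => ne_of_gt hy)
      have : (fun y => (y - x)⁻¹ * (w y - w x)) = slope w x := by
        funext y; rw [slope_def_field]; ring
      rw [this]; exact h.mono_left hm
    have Hz : Tendsto (fun y => (y - x)⁻¹ * (z y - z x)) (𝓝[>] x)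
        (𝓝 (C * w x * z x ^ (2 : ℕ) - D * z x ^ q)) := by
      have h := hasDerivAt_iff_tendsto_slope.mp (hz' x hxT)
      have hm : 𝓝[>] x ≤ 𝓝[≠] x :=
        nhdsWithin_mono _ (fun y hy => ne_of_gt hy)
      have : (fun y => (y - x)⁻¹ * (z y - z x)) = slope z x := by
        funext y; rw [slope_def_field]; ring
      rw [this]; exact h.mono_left hm
    have HG : Tendsto (fun y => max ((y - x)⁻¹ * (w y - w x)) 0
        + max ((y - x)⁻¹ * (z y - z x)) 0) (𝓝[>] x) (𝓝 (f' x)) :=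
      (Hw.max tendsto_const_nhds).add (Hz.max tendsto_const_nhds)
    have hev : ∀ᶠ y in 𝓝[>] x, max ((y - x)⁻¹ * (w y - w x)) 0
        + max ((y - x)⁻¹ * (z y - z x)) 0 < r :=
      (tendsto_order.1 HG).2 r hr
    refine (hev.mp (eventually_mem_nhdsWithin.mono ?_)).frequently
    intro y hy hlt
    refine lt_of_le_of_lt ?_ hlt
    have hyx : (0:ℝ) < y - x := sub_pos.mpr hy
    have hinv : (0:ℝ) ≤ (y - x)⁻¹ := (inv_nonneg).mpr hyx.le
    have e1 := max_sub_max_le (w y - ε₁) (w x - ε₁)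
    have e2 := max_sub_max_le (z y - ε₂) (z x - ε₂)
    have e1' : max (w y - ε₁) 0 - max (w x - ε₁) 0 ≤ max (w y - w x) 0 := by
      have : w y - ε₁ - (w x - ε₁) = w y - w x := by ring
      rwa [this] at e1
    have e2' : max (z y - ε₂) 0 - max (z x - ε₂) 0 ≤ max (z y - z x) 0 := by
      have : z y - ε₂ - (z x - ε₂) = z y - z x := by ring
      rwa [this] at e2
    have hfd : f y - f x ≤ max (w y - w x) 0 + max (z y - z x) 0 := by
      simp only [hf]; linarith
    calc (y - x)⁻¹ * (f y - f x)
        ≤ (y - x)⁻¹ * (max (w y - w x) 0 + max (z y - z x) 0) :=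
          mul_le_mul_of_nonneg_left hfd hinv
      _ = max ((y - x)⁻¹ * (w y - w x)) 0 + max ((y - x)⁻¹ * (z y - z x)) 0 := by
          rw [mul_add, mul_max_of_nonneg _ _ hinv, mul_max_of_nonneg _ _ hinv,
            mul_zero]
  have hbound : ∀ x ∈ Ico (0:ℝ) t, f' x ≤ K * f x + 0 := by
    intro x hx
    have hxI : x ∈ Icc (0:ℝ) t := ⟨hx.1, hx.2.le⟩
    have hxT : x ∈ Ico (0:ℝ) T := hsub hxI
    obtain ⟨hwn, hzn⟩ := hnn x hxT
    have hW := aux_bound A B p ε₁ ε₂ M hA hB hp0 hp2 hε₁ hε₂ h1'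
      (w x) (z x) hwn hzn (hwM x hxI) (hzM x hxI) hε₁M hε₂M
    have hZ := aux_bound C D q ε₂ ε₁ M hC hD hq0 hq2 hε₂ hε₁ h2'
      (z x) (w x) hzn hwn (hzM x hxI) (hwM x hxI) hε₂M hε₁M
    have hZ' : C * w x * z x ^ (2 : ℕ) - D * z x ^ q
        ≤ 2 * C * M ^ 2 * (max (w x - ε₁) 0 + max (z x - ε₂) 0) := by
      have e : C * w x * z x ^ (2:ℕ) = C * z x ^ (2:ℕ) * w x := by ring
      rw [e]; linarith
    have hu0 : (0:ℝ) ≤ max (w x - ε₁) 0 := le_max_right _ _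
    have hv0 : (0:ℝ) ≤ max (z x - ε₂) 0 := le_max_right _ _
    have hMpos : (0:ℝ) < M := lt_of_lt_of_le hε₁ hε₁M
    have hmax1 : max (A * w x ^ (2 : ℕ) * z x - B * w x ^ p) 0
        ≤ 2 * A * M ^ 2 * (max (w x - ε₁) 0 + max (z x - ε₂) 0) :=
      max_le hW (by positivity)
    have hmax2 : max (C * w x * z x ^ (2 : ℕ) - D * z x ^ q) 0
        ≤ 2 * C * M ^ 2 * (max (w x - ε₁) 0 + max (z x - ε₂) 0) :=
      max_le hZ' (by positivity)
    simp only [hf'def, hf, hK]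
    nlinarith [hmax1, hmax2]
  have ha : f 0 ≤ 0 := by simp [hf, hw0, hz0]
  have hg := le_gronwallBound_of_liminf_deriv_right_le hfc hslope ha hbound
  have hft : f t ≤ 0 := by
    have := hg t ⟨ht.1, le_refl t⟩
    rwa [sub_zero, gronwallBound_ε0_δ0] at this
  have hu := le_max_left (w t - ε₁) (0:ℝ)
  have hu0 := le_max_right (w t - ε₁) (0:ℝ)
  have hv := le_max_left (z t - ε₂) (0:ℝ)
  have hv0 := le_max_right (z t - ε₂) (0:ℝ)
  simp only [hf] at hft
  constructor <;> linarith
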